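/- (Grönwall's lemma, integral form, general conclusion.) Let T ∈ (0, ∞]. Let α, ψ : [0, T) → ℝ be essentially bounded measurable functions and let λ : [0, T) → ℝ be integrable with λ(t) ≥ 0 for almost every t ∈ [0, T). Define γ(t) := ∫₀ᵗ λ(τ) dτ. If α(t) ≤ ψ(t) + ∫₀ᵗ λ(s) α(s) ds for almost every t ∈ [0, T), then for almost every t ∈ [0, T), α(t) ≤ ψ(t) + ∫₀ᵗ e^{γ(t) − γ(s)} λ(s) ψ(s) ds. -/

import Mathlib

/-!
Put `u t = ∫₀ᵗ λ α` and `γ t = ∫₀ᵗ λ`. Since `λ ≥ 0`, the hypothesis gives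
`u' = λ α ≤ λ ψ + λ u` almost everywhere. The function `e^{-γ} u` is absolutely continuous with
derivative `e^{-γ} (u' - λ u) ≤ e^{-γ} λ ψ` almost everywhere, so the fundamental theorem of
calculus for absolutely continuous functions gives `u t ≤ ∫₀ᵗ e^{γ t - γ s} λ(s) ψ(s) ds`;
it remains to add this to `α t ≤ ψ t + u t`.
-/

open MeasureTheory Filter Set

theorem LipschitzOnWith.comp_absolutelyContinuousOnInterval {X Y : Type*} [PseudoMetricSpace X]
    [PseudoMetricSpace Y] {f : ℝ → X} {g : X → Y} {a b : ℝ} {K : NNReal}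
    (hg : LipschitzOnWith K g (f '' uIcc a b)) (hf : AbsolutelyContinuousOnInterval f a b) :
    AbsolutelyContinuousOnInterval (g ∘ f) a b := by
  have hKf := Tendsto.const_mul (K : ℝ) (show Tendsto _ _ _ from hf)
  rw [mul_zero] at hKf
  refine squeeze_zero' (Eventually.of_forall fun E ↦ Finset.sum_nonneg fun _ _ ↦ dist_nonneg)
    ?_ hKf
  filter_upwards [mem_inf_of_right (mem_principal_self _)] with E hE
  rw [Finset.mul_sum]
  refine Finset.sum_le_sum fun i hi ↦ hg.dist_le_mul _ ?_ _ ?_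
  · exact mem_image_of_mem f (hE.1 i hi).1
  · exact mem_image_of_mem f (hE.1 i hi).2

theorem LocallyLipschitz.comp_absolutelyContinuousOnInterval {E Y : Type*}
    [SeminormedAddCommGroup E] [PseudoMetricSpace Y] {f : ℝ → E} {g : E → Y} {a b : ℝ}
    (hg : LocallyLipschitz g) (hf : AbsolutelyContinuousOnInterval f a b) :
    AbsolutelyContinuousOnInterval (g ∘ f) a b := by
  obtain ⟨K, hK⟩ := hg.locallyLipschitzOn.exists_lipschitzOnWith_of_compact
    (isCompact_uIcc.image_of_continuousOn hf.continuousOn)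
  exact hK.comp_absolutelyContinuousOnInterval hf

theorem integral_le_integral_exp_mul_of_ae_le_add_mul_integral {f g l : ℝ → ℝ} {a b : ℝ}
    (hab : a ≤ b) (hf : IntervalIntegrable f volume a b) (hg : IntervalIntegrable g volume a b)
    (hl : IntervalIntegrable l volume a b)
    (hfg : ∀ᵐ x ∂volume.restrict (Icc a b), f x ≤ g x + l x * ∫ s in a..x, f s) :
    ∫ x in a..b, f x ≤
      ∫ x in a..b, Real.exp ((∫ s in a..b, l s) - ∫ s in a..x, l s) * g x := by
  set u : ℝ → ℝ := fun x ↦ ∫ s in a..x, f s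
  set γ : ℝ → ℝ := fun x ↦ ∫ s in a..x, l s
  set v : ℝ → ℝ := fun x ↦ Real.exp (-γ x)
  have hv : AbsolutelyContinuousOnInterval v a b :=
    Real.contDiff_exp.locallyLipschitz.comp_absolutelyContinuousOnInterval
      (hl.absolutelyContinuousOnInterval_intervalIntegral left_mem_uIcc).neg
  have hvu : AbsolutelyContinuousOnInterval (v * u) a b :=
    hv.mul (hf.absolutelyContinuousOnInterval_intervalIntegral left_mem_uIcc)
  have hderiv : ∀ᵐ x ∂volume.restrict (Icc a b), deriv (v * u) x ≤ v x * g x := by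
    have hu := hf.ae_hasDerivAt_integral
    have hγ := hl.ae_hasDerivAt_integral
    rw [uIcc_of_le hab] at hu hγ
    filter_upwards [hfg, ae_restrict_of_ae hu, ae_restrict_of_ae hγ,
      ae_restrict_mem measurableSet_Icc] with x hx hux hγx hmem
    have hmem' : a ∈ Icc a b := left_mem_Icc.mpr hab
    have hvu' : HasDerivAt (v * u) (v x * -l x * u x + v x * f x) x :=
      (hγx hmem a hmem').neg.exp.mul (hux hmem a hmem')
    calc deriv (v * u) x = v x * (f x - l x * u x) := by rw [hvu'.deriv]; ring
      _ ≤ v x * g x := mul_le_mul_of_nonneg_left (by linarith) (Real.exp_pos _).le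
  have hvu_le : v b * u b ≤ ∫ x in a..b, v x * g x := by
    have := intervalIntegral.integral_mono_ae_restrict hab hvu.intervalIntegrable_deriv
      (hg.continuousOn_mul hv.continuousOn) hderiv
    simpa [hvu.integral_deriv_eq_sub, u] using this
  calc u b = Real.exp (γ b) * (v b * u b) := by
        simp only [v, ← mul_assoc, ← Real.exp_add, add_neg_cancel, Real.exp_zero, one_mul]
    _ ≤ Real.exp (γ b) * ∫ x in a..b, v x * g x := by gcongr
    _ = _ := by
        rw [← intervalIntegral.integral_const_mul]
        simp only [v, γ, ← mul_assoc, ← Real.exp_add, sub_eq_add_neg]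

theorem gronwall_integral_general_general
    (T : EReal)
    (α ψ lam : ℝ → ℝ)
    (S : Set ℝ) (hS : S = {t : ℝ | 0 ≤ t ∧ (t : EReal) < T})
    (hα_meas : Measurable α) (hψ_meas : Measurable ψ)
    (hα_bdd : ∃ C : ℝ, ∀ᵐ t ∂(volume.restrict S), |α t| ≤ C)
    (hψ_bdd : ∃ C : ℝ, ∀ᵐ t ∂(volume.restrict S), |ψ t| ≤ C)
    (hlam_int : IntegrableOn lam S)
    (hlam_nonneg : ∀ᵐ t ∂(volume.restrict S), 0 ≤ lam t)
    (h : ∀ᵐ t ∂(volume.restrict S), α t ≤ ψ t + ∫ s in (0:ℝ)..t, lam s * α s) :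
    ∀ᵐ t ∂(volume.restrict S),
      α t ≤ ψ t + ∫ s in (0:ℝ)..t,
        Real.exp ((∫ τ in (0:ℝ)..t, lam τ) - (∫ τ in (0:ℝ)..s, lam τ)) * lam s * ψ s := by
  have hS_meas : MeasurableSet S :=
    hS ▸ measurableSet_Ici.inter (measurable_coe_real_ereal measurableSet_Iio)
  have hlam_mul {β : ℝ → ℝ} (hβ : Measurable β)
      (hβ_bdd : ∃ C : ℝ, ∀ᵐ t ∂(volume.restrict S), |β t| ≤ C) :
      IntegrableOn (fun s ↦ lam s * β s) S :=
    hlam_int.mul_bdd hβ.aestronglyMeasurable hβ_bdd.choose_spec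
  filter_upwards [h, ae_restrict_mem hS_meas] with t ht htS
  rw [hS] at htS
  obtain ⟨ht0, htT⟩ := htS
  have hsub : Icc 0 t ⊆ S := fun x hx ↦
    hS ▸ ⟨hx.1, (EReal.coe_le_coe_iff.2 hx.2).trans_lt htT⟩
  have hrestrict {φ : ℝ → ℝ} (hφ : IntegrableOn φ S) : IntervalIntegrable φ volume 0 t :=
    (intervalIntegrable_iff_integrableOn_Icc_of_le ht0).2 (hφ.mono_set hsub)
  have hineq : ∀ᵐ s ∂volume.restrict (Icc 0 t),
      lam s * α s ≤ lam s * ψ s + lam s * ∫ r in (0:ℝ)..s, lam r * α r := by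
    filter_upwards [ae_restrict_of_ae_restrict_of_subset hsub h,
      ae_restrict_of_ae_restrict_of_subset hsub hlam_nonneg] with s hs hlam_s
    rw [← mul_add]
    exact mul_le_mul_of_nonneg_left hs hlam_s
  have hu_le := integral_le_integral_exp_mul_of_ae_le_add_mul_integral ht0
    (hrestrict (hlam_mul hα_meas hα_bdd)) (hrestrict (hlam_mul hψ_meas hψ_bdd))
    (hrestrict hlam_int) hineq
  simp only [← mul_assoc] at hu_le
  linarith

/-- Grönwall's lemma, integral form, general conclusion, on the interval `[0, T)`
with `T ∈ (0, ∞]` (encoded as `T : EReal` with `0 < T`). -/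
theorem gronwall_integral_general
    (T : EReal) (hT : 0 < T)
    (α ψ lam : ℝ → ℝ)
    (S : Set ℝ) (hS : S = {t : ℝ | 0 ≤ t ∧ (t : EReal) < T})
    (hα_meas : Measurable α) (hψ_meas : Measurable ψ)
    (hα_bdd : ∃ C : ℝ, ∀ᵐ t ∂(volume.restrict S), |α t| ≤ C)
    (hψ_bdd : ∃ C : ℝ, ∀ᵐ t ∂(volume.restrict S), |ψ t| ≤ C)
    (hlam_int : IntegrableOn lam S)
    (hlam_nonneg : ∀ᵐ t ∂(volume.restrict S), 0 ≤ lam t)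
    (h : ∀ᵐ t ∂(volume.restrict S), α t ≤ ψ t + ∫ s in (0:ℝ)..t, lam s * α s) :
    ∀ᵐ t ∂(volume.restrict S),
      α t ≤ ψ t + ∫ s in (0:ℝ)..t,
        Real.exp ((∫ τ in (0:ℝ)..t, lam τ) - (∫ τ in (0:ℝ)..s, lam τ)) * lam s * ψ s :=
  gronwall_integral_general_general T α ψ lam S hS hα_meas hψ_meas hα_bdd hψ_bdd hlam_int
    hlam_nonneg h
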